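/- arXiv:1607.05335 — 2 statements merged into one kernel-verified Lean document; each statement's English description precedes it below -/
import Mathlib

section
/- Let α > 2 be a real number, c > 0, and K a positive integer. Then ∫_0^∞ (1 − (1 + c r^{-α})^{-K}) · r dr = (c^{2/α}/α) · Σ_{m=1}^{K} binom(K,m) · B(K − m + 2/α, m − 2/α), where B denotes the Beta function. -/
open MeasureTheory Real

/-- The Beta function `B(x,y) = ∫_0^1 t^{x-1} (1-t)^{y-1} dt`. -/
noncomputable def betaFun (x y : ℝ) : ℝ :=
  ∫ t in Set.Ioo (0 : ℝ) 1, t ^ (x - 1) * (1 - t) ^ (y - 1)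

/-!
The substitution `u = (1 + c r^{-α})⁻¹`, i.e. `r = (c u / (1 - u))^{1/α}`, maps `(0, ∞)` onto
`(0, 1)`, turns the integrand into `1 - u^K` and `r dr` into
`(c^{2/α} / α) u^{2/α - 1} (1 - u)^{-2/α - 1} du`. Expanding
`1 - u^K = ((1 - u) + u)^K - u^K` by the binomial theorem splits the integral into Beta integrals,
all convergent because `0 < 2/α < 1`.
-/

section BetaExpansion

open Finset

theorem add_pow_eq_pow_add_sum_Icc {R : Type*} [CommSemiring R] (x y : R) (n : ℕ) :
    (x + y) ^ n = y ^ n + ∑ m ∈ Icc 1 n, (n.choose m : R) * (x ^ m * y ^ (n - m)) := by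
  rw [add_pow, range_eq_Ico, sum_eq_sum_Ico_succ_bot (by omega : 0 < n + 1), zero_add,
    Ico_add_one_right_eq_Icc]
  simp only [pow_zero, Nat.sub_zero, Nat.choose_zero_right, Nat.cast_one, one_mul, mul_one]
  exact congrArg _ (sum_congr rfl fun m _ => by ring)

lemma integrableOn_rpow_mul_one_sub_rpow {x y : ℝ} (hx : 0 < x) (hy : 0 < y) :
    IntegrableOn (fun t : ℝ => t ^ (x - 1) * (1 - t) ^ (y - 1)) (Set.Ioo 0 1) := by
  have h := Complex.betaIntegral_convergent (u := x) (v := y) (by simpa using hx)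
    (by simpa using hy)
  rw [intervalIntegrable_iff, Set.uIoc_of_le zero_le_one] at h
  refine (IntegrableOn.mono_set h.norm Set.Ioo_subset_Ioc_self).congr_fun
    (fun t ⟨ht0, ht1⟩ => ?_) measurableSet_Ioo
  dsimp only
  rw [norm_mul, Complex.norm_cpow_eq_rpow_re_of_pos ht0, show (1 : ℂ) - t = (1 - t : ℝ) by simp,
    Complex.norm_cpow_eq_rpow_re_of_pos (sub_pos.mpr ht1)]
  simp

lemma integral_one_sub_pow_mul_eq_sum_betaFun {β : ℝ} (hβ0 : 0 < β) (hβ1 : β < 1) (K : ℕ) :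
    ∫ u in Set.Ioo 0 1, (1 - u ^ K) * (u ^ (β - 1) * (1 - u) ^ (-β - 1))
      = ∑ m ∈ Icc 1 K, (K.choose m : ℝ) * betaFun (K - m + β) (m - β) := by
  have hexpand : ∀ u ∈ Set.Ioo (0 : ℝ) 1, (1 - u ^ K) * (u ^ (β - 1) * (1 - u) ^ (-β - 1))
      = ∑ m ∈ Icc 1 K,
          (K.choose m : ℝ) * (u ^ ((K : ℝ) - m + β - 1) * (1 - u) ^ ((m : ℝ) - β - 1)) := by
    intro u ⟨hu0, hu1⟩
    have h1u : 0 < 1 - u := by linarith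
    have hbinom := add_pow_eq_pow_add_sum_Icc (1 - u) u K
    rw [sub_add_cancel, one_pow] at hbinom
    rw [← eq_sub_iff_add_eq'.mpr hbinom.symm, sum_mul]
    refine sum_congr rfl fun m hm => ?_
    have hmK : m ≤ K := (mem_Icc.mp hm).2
    rw [show (K : ℝ) - m + β - 1 = (K - m : ℕ) + (β - 1) by push_cast [Nat.cast_sub hmK]; ring,
      show (m : ℝ) - β - 1 = m + (-β - 1) by ring, rpow_add hu0, rpow_add h1u, rpow_natCast,
      rpow_natCast]
    ring
  have hint : ∀ m ∈ Icc 1 K, IntegrableOn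
      (fun u : ℝ => u ^ ((K : ℝ) - m + β - 1) * (1 - u) ^ ((m : ℝ) - β - 1)) (Set.Ioo 0 1) := by
    intro m hm
    obtain ⟨h1m, hmK⟩ := mem_Icc.mp hm
    have : (1 : ℝ) ≤ m := by exact_mod_cast h1m
    have : (m : ℝ) ≤ K := by exact_mod_cast hmK
    exact integrableOn_rpow_mul_one_sub_rpow (by linarith) (by linarith)
  rw [setIntegral_congr_fun measurableSet_Ioo hexpand,
    integral_finsetSum _ fun m hm => (hint m hm).const_mul _]
  exact sum_congr rfl fun m _ => integral_const_mul _ _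

end BetaExpansion

section Substitution

open Set

variable {α c : ℝ}

lemma inv_one_add_mul_rpow_inv_rpow_neg (hα : α ≠ 0) (hc : 0 < c) {u : ℝ} (hu : u ∈ Ioo 0 1) :
    (1 + c * ((c * u / (1 - u)) ^ α⁻¹) ^ (-α))⁻¹ = u := by
  obtain ⟨hu0, hu1⟩ := hu
  have h1u : 0 < 1 - u := by linarith
  rw [← rpow_mul (by positivity), mul_neg, inv_mul_cancel₀ hα, rpow_neg_one]
  field_simp
  ring

lemma rpow_inv_eq_of_inv_one_add_mul_rpow_neg (hα : α ≠ 0) (hc : 0 < c) {r : ℝ} (hr : 0 < r) :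
    (c * (1 + c * r ^ (-α))⁻¹ / (1 - (1 + c * r ^ (-α))⁻¹)) ^ α⁻¹ = r := by
  have hrα : 0 < r ^ α := rpow_pos_of_pos hr α
  have key : c * (1 + c * r ^ (-α))⁻¹ / (1 - (1 + c * r ^ (-α))⁻¹) = r ^ α := by
    rw [rpow_neg hr.le]
    field_simp [hc.ne']
    ring
  rw [key, rpow_rpow_inv hr.le hα]

-- The logarithmic derivative of `(c u / (1 - u)) ^ α⁻¹` is `α⁻¹ (1 / u + 1 / (1 - u))`.
lemma hasDerivAt_rpow_inv_mul_div_one_sub (hc : 0 < c) {u : ℝ} (hu : u ∈ Ioo 0 1) :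
    HasDerivAt (fun u => (c * u / (1 - u)) ^ α⁻¹)
      (α⁻¹ * (c * u / (1 - u)) ^ α⁻¹ / (u * (1 - u))) u := by
  obtain ⟨hu0, hu1⟩ := hu
  have h1u : 0 < 1 - u := by linarith
  have hw : 0 < c * u / (1 - u) := by positivity
  have hdiv : HasDerivAt (fun u => c * u / (1 - u)) (c / (1 - u) ^ 2) u :=
    (((hasDerivAt_id' u).const_mul c).fun_div ((hasDerivAt_id' u).const_sub 1)
      h1u.ne').congr_deriv (by ring)
  convert hdiv.rpow_const (p := α⁻¹) (Or.inl hw.ne') using 1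
  rw [rpow_sub_one hw.ne']
  field_simp

lemma rpow_inv_mul_div_one_sub_jacobian (hc : 0 < c) {u : ℝ} (hu : u ∈ Ioo 0 1) :
    α⁻¹ * (c * u / (1 - u)) ^ α⁻¹ / (u * (1 - u)) * (c * u / (1 - u)) ^ α⁻¹
      = c ^ (2 / α) / α * (u ^ (2 / α - 1) * (1 - u) ^ (-(2 / α) - 1)) := by
  obtain ⟨hu0, hu1⟩ := hu
  have h1u : 0 < 1 - u := by linarith
  have hsq : (c * u / (1 - u)) ^ α⁻¹ * (c * u / (1 - u)) ^ α⁻¹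
      = c ^ (2 / α) * u ^ (2 / α) / (1 - u) ^ (2 / α) := by
    rw [← rpow_add (by positivity), ← two_mul, ← div_eq_mul_inv, div_rpow (by positivity) h1u.le,
      mul_rpow hc.le hu0.le]
  rw [rpow_sub_one hu0.ne', rpow_sub_one h1u.ne', rpow_neg h1u.le, mul_div_right_comm,
    mul_assoc, hsq]
  field_simp

lemma image_rpow_inv_mul_div_one_sub_Ioo (hα : α ≠ 0) (hc : 0 < c) :
    (fun u => (c * u / (1 - u)) ^ α⁻¹) '' Ioo 0 1 = Ioi 0 := by
  refine Subset.antisymm ?_ fun r hr => ⟨(1 + c * r ^ (-α))⁻¹, ⟨?_, ?_⟩,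
    rpow_inv_eq_of_inv_one_add_mul_rpow_neg hα hc hr⟩
  · rintro _ ⟨u, ⟨hu0, hu1⟩, rfl⟩
    have h1u : 0 < 1 - u := by linarith
    exact rpow_pos_of_pos (by positivity) _
  all_goals have := mul_pos hc (rpow_pos_of_pos (mem_Ioi.mp hr) (-α))
  · positivity
  · exact inv_lt_one_of_one_lt₀ (by linarith)

lemma integral_Ioi_comp_inv_one_add_mul_rpow_neg (hα : 0 < α) (hc : 0 < c) (g : ℝ → ℝ) :
    ∫ r in Ioi 0, g (1 + c * r ^ (-α))⁻¹ * r
      = c ^ (2 / α) / α * ∫ u in Ioo 0 1, g u * (u ^ (2 / α - 1) * (1 - u) ^ (-(2 / α) - 1)) := by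
  have hinj : InjOn (fun u => (c * u / (1 - u)) ^ α⁻¹) (Ioo 0 1) := fun u hu v hv huv => by
    rw [← inv_one_add_mul_rpow_inv_rpow_neg hα.ne' hc hu,
      ← inv_one_add_mul_rpow_inv_rpow_neg hα.ne' hc hv]
    exact congrArg (fun r => (1 + c * r ^ (-α))⁻¹) huv
  rw [← image_rpow_inv_mul_div_one_sub_Ioo hα.ne' hc, integral_image_eq_integral_abs_deriv_smul
    measurableSet_Ioo (fun u hu => (hasDerivAt_rpow_inv_mul_div_one_sub hc hu).hasDerivWithinAt)
    hinj, ← integral_const_mul]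
  refine setIntegral_congr_fun measurableSet_Ioo fun u hu => ?_
  have hu0 : 0 < u := hu.1
  have h1u : 0 < 1 - u := sub_pos.mpr hu.2
  rw [smul_eq_mul, inv_one_add_mul_rpow_inv_rpow_neg hα.ne' hc hu, abs_of_pos (by positivity),
    mul_left_comm, rpow_inv_mul_div_one_sub_jacobian hc hu]
  ring

end Substitution

theorem integral_one_sub_inv_one_add_rpow_general (α : ℝ) (hα : 2 < α) (c : ℝ) (hc : 0 < c)
    (K : ℕ) :
    ∫ r in Set.Ioi (0 : ℝ), (1 - ((1 + c * r ^ (-α)) ^ K)⁻¹) * r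
      = c ^ (2 / α) / α *
        ∑ m ∈ Finset.Icc 1 K,
          (K.choose m : ℝ) * betaFun ((K : ℝ) - m + 2 / α) ((m : ℝ) - 2 / α) := by
  have hα0 : 0 < α := by linarith
  simp_rw [← inv_pow]
  rw [integral_Ioi_comp_inv_one_add_mul_rpow_neg (g := fun u => 1 - u ^ K) hα0 hc,
    integral_one_sub_pow_mul_eq_sum_betaFun (by positivity) ((div_lt_one hα0).mpr hα)]

/-- For `α > 2`, `c > 0` and `K ≥ 1`,
`∫_0^∞ (1 − (1 + c r^{-α})^{-K}) r dr
  = (c^{2/α}/α) ∑_{m=1}^{K} C(K,m) B(K − m + 2/α, m − 2/α)`. -/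
theorem integral_one_sub_inv_one_add_rpow (α : ℝ) (hα : 2 < α) (c : ℝ) (hc : 0 < c)
    (K : ℕ) (hK : 0 < K) :
    ∫ r in Set.Ioi (0 : ℝ), (1 - ((1 + c * r ^ (-α)) ^ K)⁻¹) * r
      = c ^ (2 / α) / α *
        ∑ m ∈ Finset.Icc 1 K,
          (K.choose m : ℝ) * betaFun ((K : ℝ) - m + 2 / α) ((m : ℝ) - 2 / α) :=
  integral_one_sub_inv_one_add_rpow_general α hα c hc K
end

section
/- Let Δ be a positive integer and let h, X, Y, W be independent nonnegative random variables with h distributed according to the Gamma distribution with shape Δ and rate 1. Let a > 0 and b > 0, and write L_X, L_Y, L_W for the Laplace transforms of X, Y, W respectively. Then P( h > a(X + Y) + bW ) = Σ_{i=0}^{Δ−1} ( (−1)^i / i! ) Σ_{k=0}^{i} Σ_{n=0}^{i−k} binom(i,k) · binom(i−k, n) · a^{i−k} · b^{k} · L_X^{(i−k−n)}(a) · L_Y^{(n)}(a) · L_W^{(k)}(b), where L^{(m)} denotes the m-th derivative. -/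
/-!
Conditioning on `Z = a(X+Y) + bW`, which is independent of `h`, gives
`P(h > Z) = E[e^{-Z} ∑_{i<Δ} Z^i/i!]`, the Erlang tail of `Γ(Δ,1)` evaluated at `Z`.
Since `(-1)^i (-Z)^i = Z^i`, it remains to compute `E[(-Z)^i e^{-Z}]`: expanding `(-Z)^i` twice by
the binomial theorem and factoring the expectations by independence leaves products
`E[(-X)^p e^{-aX}] E[(-Y)^q e^{-aY}] E[(-W)^r e^{-bW}]`, which are
`L_X^{(p)}(a) L_Y^{(q)}(a) L_W^{(r)}(b)` by differentiation under the integral sign, dominated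
through `x^p e^{-sx} ≤ p!/s^p`.
-/

open MeasureTheory ProbabilityTheory Real Set Filter Topology
open scoped Nat ENNReal

theorem norm_neg_pow_mul_exp_neg_mul_le (m : ℕ) {s x : ℝ} (hs : 0 < s) (hx : 0 ≤ x) :
    ‖(-x) ^ m * exp (-(s * x))‖ ≤ m ! / s ^ m := by
  have hexp : (s * x) ^ m / m ! ≤ exp (s * x) := pow_div_factorial_le_exp _ (by positivity) m
  rw [norm_mul, norm_pow, norm_neg, norm_of_nonneg hx, norm_of_nonneg (exp_nonneg _),
    le_div_iff₀ (by positivity)]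
  calc x ^ m * exp (-(s * x)) * s ^ m = (s * x) ^ m / m ! * exp (-(s * x)) * m ! := by
        field_simp; ring
    _ ≤ exp (s * x) * exp (-(s * x)) * m ! := by gcongr
    _ = m ! := by rw [← exp_add, add_neg_cancel, exp_zero, one_mul]

section Laplace

variable {Ω : Type*} [MeasurableSpace Ω] {μ : Measure Ω} {X : Ω → ℝ}

theorem memLp_top_neg_pow_mul_exp_neg_mul (hX : Measurable X) (hX0 : ∀ ω, 0 ≤ X ω) (m : ℕ)
    {s : ℝ} (hs : 0 < s) : MemLp (fun ω => (-X ω) ^ m * exp (-(s * X ω))) ∞ μ :=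
  memLp_top_of_bound (by fun_prop) _
    (ae_of_all _ fun ω => norm_neg_pow_mul_exp_neg_mul_le m hs (hX0 ω))

variable [IsFiniteMeasure μ]

theorem hasDerivAt_integral_neg_pow_mul_exp_neg_mul (hX : Measurable X) (hX0 : ∀ ω, 0 ≤ X ω)
    (m : ℕ) {s : ℝ} (hs : 0 < s) :
    HasDerivAt (fun t => ∫ ω, (-X ω) ^ m * exp (-(t * X ω)) ∂μ)
      (∫ ω, (-X ω) ^ (m + 1) * exp (-(s * X ω)) ∂μ) s := by
  refine (hasDerivAt_integral_of_dominated_loc_of_deriv_le (Metric.ball_mem_nhds s (half_pos hs))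
    (F := fun t ω => (-X ω) ^ m * exp (-(t * X ω)))
    (F' := fun t ω => (-X ω) ^ (m + 1) * exp (-(t * X ω)))
    (bound := fun _ => (m + 1)! / (s / 2) ^ (m + 1))
    (.of_forall fun t => (by fun_prop : Measurable _).aestronglyMeasurable)
    ((memLp_top_neg_pow_mul_exp_neg_mul hX hX0 m hs).integrable le_top)
    (by fun_prop : Measurable _).aestronglyMeasurable ?_ (integrable_const _) ?_).2
  · -- on the ball `t ≥ s / 2`, so the derivative is dominated by its value at `s / 2`
    refine ae_of_all _ fun ω t ht => ?_
    have hts : s / 2 ≤ t := by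
      linarith [(abs_lt.mp (mem_ball_iff_norm.mp ht)).1]
    refine le_trans ?_ (norm_neg_pow_mul_exp_neg_mul_le (m + 1) (half_pos hs) (hX0 ω))
    rw [norm_mul, norm_mul, norm_of_nonneg (exp_nonneg _), norm_of_nonneg (exp_nonneg _)]
    gcongr
    exact hX0 ω
  · refine ae_of_all _ fun ω t _ => ?_
    have hd := ((((hasDerivAt_id t).mul_const (X ω)).neg).exp).const_mul ((-X ω) ^ m)
    exact hd.congr_deriv (by simp only [id, one_mul, Pi.neg_apply, pow_succ]; ring)

theorem iteratedDeriv_integral_exp_neg_mul (hX : Measurable X) (hX0 : ∀ ω, 0 ≤ X ω) (m : ℕ)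
    {s : ℝ} (hs : 0 < s) :
    iteratedDeriv m (fun t => ∫ ω, exp (-t * X ω) ∂μ) s
      = ∫ ω, (-X ω) ^ m * exp (-(s * X ω)) ∂μ := by
  induction m generalizing s with
  | zero => simp only [iteratedDeriv_zero, pow_zero, one_mul, neg_mul]
  | succ m ih =>
    have hnear : iteratedDeriv m (fun t => ∫ ω, exp (-t * X ω) ∂μ)
        =ᶠ[𝓝 s] fun t => ∫ ω, (-X ω) ^ m * exp (-(t * X ω)) ∂μ :=
      eventually_of_mem (Ioi_mem_nhds hs) fun t ht => ih ht
    rw [iteratedDeriv_succ, hnear.deriv_eq]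
    exact (hasDerivAt_integral_neg_pow_mul_exp_neg_mul hX hX0 m hs).deriv

end Laplace

theorem hasDerivAt_sum_range_pow_div_factorial (n : ℕ) (x : ℝ) :
    HasDerivAt (fun x : ℝ => ∑ i ∈ Finset.range (n + 1), x ^ i / i !)
      (∑ i ∈ Finset.range n, x ^ i / i !) x := by
  induction n with
  | zero => simpa using hasDerivAt_const x (1 : ℝ)
  | succ n ih =>
    simp only [Finset.sum_range_succ _ (n + 1)]
    refine (ih.add ((hasDerivAt_pow (n + 1) x).div_const ((n + 1)! : ℝ))).congr_deriv ?_
    rw [Finset.sum_range_succ, Nat.factorial_succ]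
    push_cast
    field_simp

theorem integrableOn_Ioi_pow_mul_exp_neg (n : ℕ) (t : ℝ) :
    IntegrableOn (fun x : ℝ => x ^ n * exp (-x)) (Ioi t) := by
  refine integrable_of_isBigO_exp_neg (b := 1 / 2) (by norm_num) (by fun_prop) ?_
  refine ((isLittleO_pow_exp_pos_mul_atTop n (b := 1 / 2) (by norm_num)).isBigO.mul
    (Asymptotics.isBigO_refl (fun x : ℝ => exp (-x)) atTop)).congr_right fun x => ?_
  rw [← exp_add]
  ring_nf

theorem integral_Ioi_pow_mul_exp_neg_div_factorial (n : ℕ) (t : ℝ) :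
    ∫ x in Ioi t, x ^ n * exp (-x) / n !
      = exp (-t) * ∑ i ∈ Finset.range (n + 1), t ^ i / i ! := by
  have hderiv (x : ℝ) :
      HasDerivAt (fun x : ℝ => -(exp (-x) * ∑ i ∈ Finset.range (n + 1), x ^ i / i !))
        (x ^ n * exp (-x) / n !) x := by
    have := ((hasDerivAt_neg x).exp.mul (hasDerivAt_sum_range_pow_div_factorial n x)).neg
    refine this.congr_deriv ?_
    rw [Finset.sum_range_succ]
    ring_nf
  have hlim : Tendsto (fun x : ℝ => -(exp (-x) * ∑ i ∈ Finset.range (n + 1), x ^ i / i !))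
      atTop (𝓝 0) := by
    have := (tendsto_finsetSum (Finset.range (n + 1)) fun i _ =>
      (tendsto_pow_mul_exp_neg_atTop_nhds_zero i).div_const (i ! : ℝ)).neg
    simp only [zero_div, Finset.sum_const_zero, neg_zero] at this
    refine this.congr fun x => ?_
    rw [Finset.mul_sum]
    congr 1
    exact Finset.sum_congr rfl fun i _ => by ring
  rw [integral_Ioi_of_hasDerivAt_of_tendsto' (fun x _ => hderiv x)
    ((integrableOn_Ioi_pow_mul_exp_neg n t).div_const _) hlim]
  ring

theorem gammaMeasure_Ioi_toReal {Δ : ℕ} (hΔ : 0 < Δ) {t : ℝ} (ht : 0 ≤ t) :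
    (gammaMeasure Δ 1 (Ioi t)).toReal = exp (-t) * ∑ i ∈ Finset.range Δ, t ^ i / i ! := by
  obtain ⟨n, rfl⟩ := Nat.exists_eq_add_one_of_ne_zero hΔ.ne'
  have hpdf : EqOn (gammaPDFReal (n + 1 : ℕ) 1) (fun x => x ^ n * exp (-x) / n !) (Ioi t) := by
    intro x hx
    rw [gammaPDFReal, if_pos (ht.trans (le_of_lt hx))]
    push_cast
    rw [one_rpow, add_sub_cancel_right, rpow_natCast, Gamma_nat_eq_factorial, one_mul]
    ring
  rw [gammaMeasure, withDensity_apply _ measurableSet_Ioi]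
  simp only [gammaPDF]
  rw [← integral_eq_lintegral_of_nonneg_ae
      (ae_of_all _ (gammaPDFReal_nonneg (by positivity) one_pos))
      (measurable_gammaPDFReal _ _).aestronglyMeasurable,
    setIntegral_congr_fun measurableSet_Ioi hpdf, integral_Ioi_pow_mul_exp_neg_div_factorial]

theorem mul_add_add_mul_pow {R : Type*} [CommSemiring R] (a b x y w : R) (i : ℕ) :
    (a * (x + y) + b * w) ^ i = ∑ k ∈ Finset.range (i + 1), ∑ n ∈ Finset.range (i - k + 1),
      (i.choose k : R) * ((i - k).choose n : R) * a ^ (i - k) * b ^ k *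
        (x ^ (i - k - n) * y ^ n * w ^ k) := by
  rw [add_comm, add_pow]
  refine Finset.sum_congr rfl fun k _ => ?_
  rw [mul_pow a, add_comm x, add_pow]
  simp only [Finset.mul_sum, Finset.sum_mul]
  refine Finset.sum_congr rfl fun n _ => ?_
  ring

theorem neg_pow_mul_exp_neg_eq_sum (a b x y w : ℝ) (i : ℕ) :
    (-(a * (x + y) + b * w)) ^ i * exp (-(a * (x + y) + b * w))
      = ∑ k ∈ Finset.range (i + 1), ∑ n ∈ Finset.range (i - k + 1),
          (i.choose k : ℝ) * ((i - k).choose n : ℝ) * a ^ (i - k) * b ^ k *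
            ((-x) ^ (i - k - n) * exp (-(a * x)) * ((-y) ^ n * exp (-(a * y))) *
              ((-w) ^ k * exp (-(b * w)))) := by
  have hneg : -(a * (x + y) + b * w) = a * (-x + -y) + b * -w := by ring
  have hexp : exp (-(a * (x + y) + b * w)) = exp (-(a * x)) * exp (-(a * y)) * exp (-(b * w)) := by
    rw [← exp_add, ← exp_add]
    ring_nf
  rw [hexp, hneg, mul_add_add_mul_pow, Finset.sum_mul]
  refine Finset.sum_congr rfl fun k _ => ?_
  rw [Finset.sum_mul]
  refine Finset.sum_congr rfl fun n _ => ?_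
  ring

section Independence

variable {Ω : Type*} [MeasurableSpace Ω] {μ : Measure Ω} {X Y W : Ω → ℝ}

theorem ProbabilityTheory.IndepFun.toReal_measure_lt_eq_integral [IsFiniteMeasure μ]
    {Z h : Ω → ℝ} (hZh : IndepFun Z h μ) (hZ : Measurable Z) (hh : Measurable h) :
    (μ {ω | Z ω < h ω}).toReal = ∫ ω, (μ.map h (Ioi (Z ω))).toReal ∂μ := by
  have hlt : MeasurableSet {p : ℝ × ℝ | p.1 < p.2} :=
    measurableSet_lt measurable_fst measurable_snd
  have htail : Measurable fun z => μ.map h (Ioi z) :=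
    Antitone.measurable fun _ _ hzz' => measure_mono (Ioi_subset_Ioi hzz')
  have hset : {ω | Z ω < h ω} = (fun ω => (Z ω, h ω)) ⁻¹' {p : ℝ × ℝ | p.1 < p.2} := rfl
  rw [hset, ← Measure.map_apply (hZ.prodMk hh) hlt,
    (indepFun_iff_map_prod_eq_prod_map_map hZ.aemeasurable hh.aemeasurable).mp hZh,
    Measure.prod_apply hlt]
  change (∫⁻ z, μ.map h (Ioi z) ∂μ.map Z).toReal = _
  rw [lintegral_map htail hZ]
  exact (integral_toReal (htail.comp hZ).aemeasurable
    (ae_of_all _ fun _ => measure_lt_top _ _)).symm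

theorem ProbabilityTheory.iIndepFun.integral_comp_mul_comp_mul_comp
    (hXYW : iIndepFun ![X, Y, W] μ) (hX : Measurable X) (hY : Measurable Y) (hW : Measurable W)
    {u v q : ℝ → ℝ} (hu : Measurable u) (hv : Measurable v) (hq : Measurable q) :
    ∫ ω, u (X ω) * v (Y ω) * q (W ω) ∂μ
      = (∫ ω, u (X ω) ∂μ) * (∫ ω, v (Y ω) ∂μ) * ∫ ω, q (W ω) ∂μ := by
  have hmeas : ∀ i, Measurable (![X, Y, W] i) := fun i => by fin_cases i <;> assumption
  have hXY_W : IndepFun (fun ω => u (X ω) * v (Y ω)) (fun ω => q (W ω)) μ :=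
    (hXYW.indepFun_prodMk hmeas 0 1 2 (by decide) (by decide)).comp
      (by fun_prop : Measurable fun p : ℝ × ℝ => u p.1 * v p.2) hq
  have hX_Y : IndepFun (fun ω => u (X ω)) (fun ω => v (Y ω)) μ :=
    (hXYW.indepFun (i := 0) (j := 1) (by decide)).comp hu hv
  rw [hXY_W.integral_fun_mul_eq_mul_integral (by fun_prop) (hq.comp hW).aestronglyMeasurable,
    hX_Y.integral_fun_mul_eq_mul_integral (hu.comp hX).aestronglyMeasurable
      (hv.comp hY).aestronglyMeasurable]

theorem ProbabilityTheory.iIndepFun.indepFun_comp_tail_head {h : Ω → ℝ}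
    (hindep : iIndepFun ![h, X, Y, W] μ) (hh : Measurable h) (hX : Measurable X)
    (hY : Measurable Y) (hW : Measurable W) {g : ℝ × ℝ × ℝ → ℝ} (hg : Measurable g) :
    IndepFun (fun ω => g (X ω, Y ω, W ω)) h μ := by
  have hmeas : ∀ i, Measurable (![h, X, Y, W] i) := fun i => by fin_cases i <;> assumption
  have htail : Measurable fun v : ({1, 2, 3} : Finset (Fin 4)) → ℝ =>
      g (v ⟨1, by simp⟩, v ⟨2, by simp⟩, v ⟨3, by simp⟩) := by fun_prop
  have hhead : Measurable fun v : ({0} : Finset (Fin 4)) → ℝ => v ⟨0, by simp⟩ := by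
    fun_prop
  exact (hindep.indepFun_finset {1, 2, 3} {0} (by decide) hmeas).comp htail hhead

theorem integral_neg_pow_mul_exp_neg_eq_sum_iteratedDeriv [IsFiniteMeasure μ]
    (hXYW : iIndepFun ![X, Y, W] μ) (hX : Measurable X) (hY : Measurable Y) (hW : Measurable W)
    (hX0 : ∀ ω, 0 ≤ X ω) (hY0 : ∀ ω, 0 ≤ Y ω) (hW0 : ∀ ω, 0 ≤ W ω)
    {a b : ℝ} (ha : 0 < a) (hb : 0 < b) (i : ℕ) :
    ∫ ω, (-(a * (X ω + Y ω) + b * W ω)) ^ i * exp (-(a * (X ω + Y ω) + b * W ω)) ∂μ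
      = ∑ k ∈ Finset.range (i + 1), ∑ n ∈ Finset.range (i - k + 1),
          (i.choose k : ℝ) * ((i - k).choose n : ℝ) * a ^ (i - k) * b ^ k *
            iteratedDeriv (i - k - n) (fun s => ∫ ω, exp (-s * X ω) ∂μ) a *
            iteratedDeriv n (fun s => ∫ ω, exp (-s * Y ω) ∂μ) a *
            iteratedDeriv k (fun s => ∫ ω, exp (-s * W ω) ∂μ) b := by
  have hint (p q r : ℕ) : Integrable (fun ω => (-X ω) ^ p * exp (-(a * X ω)) *
      ((-Y ω) ^ q * exp (-(a * Y ω))) * ((-W ω) ^ r * exp (-(b * W ω)))) μ :=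
    MemLp.integrable (q := ⊤) le_top <|
      (memLp_top_neg_pow_mul_exp_neg_mul hW hW0 r hb).mul'
        ((memLp_top_neg_pow_mul_exp_neg_mul hY hY0 q ha).mul' (r := ⊤)
          (memLp_top_neg_pow_mul_exp_neg_mul hX hX0 p ha))
  rw [integral_congr_ae (ae_of_all _ fun ω => neg_pow_mul_exp_neg_eq_sum a b _ _ _ i),
    integral_finsetSum _ fun k _ => integrable_finsetSum _ fun n _ => (hint _ _ _).const_mul _]
  refine Finset.sum_congr rfl fun k _ => ?_
  rw [integral_finsetSum _ fun n _ => (hint _ _ _).const_mul _]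
  refine Finset.sum_congr rfl fun n _ => ?_
  rw [integral_const_mul, hXYW.integral_comp_mul_comp_mul_comp hX hY hW
      (u := fun t => (-t) ^ (i - k - n) * exp (-(a * t))) (v := fun t => (-t) ^ n * exp (-(a * t)))
      (q := fun t => (-t) ^ k * exp (-(b * t))) (by fun_prop) (by fun_prop) (by fun_prop),
    iteratedDeriv_integral_exp_neg_mul hX hX0 _ ha, iteratedDeriv_integral_exp_neg_mul hY hY0 _ ha,
    iteratedDeriv_integral_exp_neg_mul hW hW0 _ hb]
  ring

end Independence

/-- Core identity of Theorem 1: if `h ~ Gamma(Δ,1)` and `X, Y, W` are nonnegative and the four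
random variables are independent, then for `a, b > 0`,
`P(h > a(X+Y) + bW) = ∑_{i=0}^{Δ−1} ((−1)^i/i!) ∑_{k=0}^{i} ∑_{n=0}^{i−k} C(i,k) C(i−k,n)
a^{i−k} b^k L_X^{(i−k−n)}(a) L_Y^{(n)}(a) L_W^{(k)}(b)`. -/
theorem coverage_core_identity {Ω : Type*} [MeasurableSpace Ω]
    (P : Measure Ω) [IsProbabilityMeasure P]
    (Δ : ℕ) (hΔ : 0 < Δ) (a b : ℝ) (ha : 0 < a) (hb : 0 < b)
    (h X Y W : Ω → ℝ)
    (hh : Measurable h) (hX : Measurable X) (hY : Measurable Y) (hW : Measurable W)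
    (hXpos : ∀ ω, 0 ≤ X ω) (hYpos : ∀ ω, 0 ≤ Y ω) (hWpos : ∀ ω, 0 ≤ W ω)
    (hindep : iIndepFun (m := fun _ : Fin 4 => (inferInstance : MeasurableSpace ℝ))
      ![h, X, Y, W] P)
    (hlaw : Measure.map h P = gammaMeasure Δ 1) :
    (P {ω | a * (X ω + Y ω) + b * W ω < h ω}).toReal
      = ∑ i ∈ Finset.range Δ, (-1 : ℝ) ^ i / (Nat.factorial i) *
          ∑ k ∈ Finset.range (i + 1), ∑ n ∈ Finset.range (i - k + 1),
            (i.choose k : ℝ) * ((i - k).choose n : ℝ) * a ^ (i - k) * b ^ k *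
              iteratedDeriv (i - k - n) (fun s => ∫ ω, Real.exp (-s * X ω) ∂P) a *
              iteratedDeriv n (fun s => ∫ ω, Real.exp (-s * Y ω) ∂P) a *
              iteratedDeriv k (fun s => ∫ ω, Real.exp (-s * W ω) ∂P) b := by
  have hXYW : iIndepFun ![X, Y, W] P := hindep.precomp (g := Fin.succ) (Fin.succ_injective 3)
  set Z := fun ω => a * (X ω + Y ω) + b * W ω
  have hZ0 : ∀ ω, 0 ≤ Z ω := fun ω => by
    have := hXpos ω; have := hYpos ω; have := hWpos ω; positivity
  have hZh : IndepFun Z h P := hindep.indepFun_comp_tail_head hh hX hY hW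
    (g := fun p => a * (p.1 + p.2.1) + b * p.2.2) (by fun_prop)
  have htail : ∀ t, 0 ≤ t → (gammaMeasure Δ 1 (Ioi t)).toReal
      = ∑ i ∈ Finset.range Δ, (-1 : ℝ) ^ i / i ! * ((-t) ^ i * exp (-t)) := fun t ht => by
    rw [gammaMeasure_Ioi_toReal hΔ ht, Finset.mul_sum]
    refine Finset.sum_congr rfl fun i _ => ?_
    have hsign : (-1 : ℝ) ^ i * (-t) ^ i = t ^ i := by rw [← mul_pow, neg_one_mul, neg_neg]
    rw [← hsign]
    ring
  have hZint : ∀ i, Integrable (fun ω => (-Z ω) ^ i * exp (-Z ω)) P := fun i => by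
    simpa only [one_mul] using
      (memLp_top_neg_pow_mul_exp_neg_mul (μ := P) (by fun_prop) hZ0 i one_pos).integrable le_top
  rw [show {ω | a * (X ω + Y ω) + b * W ω < h ω} = {ω | Z ω < h ω} from rfl,
    hZh.toReal_measure_lt_eq_integral (by fun_prop) hh, hlaw,
    integral_congr_ae (ae_of_all _ fun ω => htail _ (hZ0 ω)),
    integral_finsetSum _ fun i _ => (hZint i).const_mul _]
  refine Finset.sum_congr rfl fun i _ => ?_
  rw [integral_const_mul,
    ← integral_neg_pow_mul_exp_neg_eq_sum_iteratedDeriv hXYW hX hY hW hXpos hYpos hWpos ha hb]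
end
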